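/- arXiv:1909.12898 — 2 statements merged into one kernel-verified Lean document; each statement's English description precedes it below -/
import Mathlib

section
/- For any y ∈ ℝ^d, the Euclidean projection of y onto the probability simplex Δ_d = {x ∈ ℝ^d : x ≥ 0, Σᵢ xᵢ = 1} has the form (y − b̄·1)_+ for some unique scalar b̄ ∈ ℝ satisfying Σᵢ max(yᵢ − b̄, 0) = 1. -/
/-!
The map `b ↦ ∑ i, max (y i - b) 0` is continuous, vanishes at `b = max y`, and is strictly
decreasing wherever it is positive, so it takes the value `1` at exactly one `b`. For
`p = (y - b)₊` one has `p - y = max (b - y) 0 - b` coordinatewise, and the first term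
vanishes where `p` is positive; hence `⟪p - y, x - p⟫ ≥ -b (∑ x - ∑ p) = 0` for every `x` in
the simplex, and expanding `‖x - y‖² = ‖p - y‖² + ‖x - p‖² + 2⟪p - y, x - p⟫` shows that `p`
is the nearest point.
-/

open BigOperators

/-- Euclidean distance on `Fin d → ℝ`. -/
noncomputable def edist2 {d : ℕ} (x y : Fin d → ℝ) : ℝ :=
  Real.sqrt (∑ i, (x i - y i) ^ 2)

/-- The probability simplex in `ℝ^d`. -/
def simplex (d : ℕ) : Set (Fin d → ℝ) :=
  {x | (∀ i, 0 ≤ x i) ∧ ∑ i, x i = 1}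

section

variable {ι : Type*} [Fintype ι] (y : ι → ℝ)

theorem continuous_sum_max_sub_const : Continuous fun b : ℝ => ∑ i, max (y i - b) 0 := by
  fun_prop

theorem sum_max_sub_lt_of_lt {b₁ b₂ : ℝ} (h : b₁ < b₂) (hpos : 0 < ∑ i, max (y i - b₂) 0) :
    ∑ i, max (y i - b₂) 0 < ∑ i, max (y i - b₁) 0 := by
  obtain ⟨j, -, hj⟩ : ∃ j ∈ Finset.univ, (0 : ℝ) < max (y j - b₂) 0 :=
    Finset.exists_lt_of_sum_lt (by simpa using hpos)
  refine Finset.sum_lt_sum (fun i _ => max_le_max (by linarith) le_rfl) ⟨j, Finset.mem_univ j, ?_⟩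
  have hj' : 0 < y j - b₂ := by simpa using hj
  rw [max_eq_left hj'.le]
  exact lt_max_of_lt_left (by linarith)

theorem eq_of_sum_max_sub_eq {c b b' : ℝ} (hc : 0 < c) (hb : ∑ i, max (y i - b) 0 = c)
    (hb' : ∑ i, max (y i - b') 0 = c) : b = b' := by
  by_contra hne
  rcases lt_or_gt_of_ne hne with h | h
  · exact (sum_max_sub_lt_of_lt y h (hb' ▸ hc)).ne (hb'.trans hb.symm)
  · exact (sum_max_sub_lt_of_lt y h (hb ▸ hc)).ne (hb.trans hb'.symm)

theorem exists_sum_max_sub_eq [Nonempty ι] {c : ℝ} (hc : 0 ≤ c) :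
    ∃ b, ∑ i, max (y i - b) 0 = c := by
  obtain ⟨j, hj⟩ := Finite.exists_max y
  have h_top : ∑ i, max (y i - y j) 0 = 0 :=
    Finset.sum_eq_zero fun i _ => max_eq_right (by linarith [hj i])
  have h_bot : c ≤ ∑ i, max (y i - (y j - c)) 0 :=
    calc c = max (y j - (y j - c)) 0 := by simp [hc]
      _ ≤ ∑ i, max (y i - (y j - c)) 0 :=
        Finset.single_le_sum (f := fun i => max (y i - (y j - c)) 0)
          (fun i _ => le_max_right _ _) (Finset.mem_univ j)
  obtain ⟨b, -, hb⟩ := intermediate_value_Icc' (by linarith : y j - c ≤ y j)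
    (continuous_sum_max_sub_const y).continuousOn ⟨by rw [h_top]; exact hc, h_bot⟩
  exact ⟨b, hb⟩

theorem sum_sub_max_mul_sub_nonneg {b : ℝ} {x : ι → ℝ} (hx : ∀ i, 0 ≤ x i)
    (hsum : ∑ i, x i = ∑ i, max (y i - b) 0) :
    0 ≤ ∑ i, (max (y i - b) 0 - y i) * (x i - max (y i - b) 0) := by
  have hterm : ∀ i, -b * (x i - max (y i - b) 0) ≤
      (max (y i - b) 0 - y i) * (x i - max (y i - b) 0) := by
    intro i
    rcases le_or_gt (y i) b with h | h
    · rw [max_eq_right (by linarith)]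
      nlinarith [hx i]
    · rw [max_eq_left (by linarith)]
      exact le_of_eq (by ring)
  calc (0 : ℝ) = ∑ i, -b * (x i - max (y i - b) 0) := by
        rw [← Finset.mul_sum, Finset.sum_sub_distrib, hsum, sub_self, mul_zero]
    _ ≤ _ := Finset.sum_le_sum fun i _ => hterm i

theorem sum_sq_max_sub_le {b : ℝ} {x : ι → ℝ} (hx : ∀ i, 0 ≤ x i)
    (hsum : ∑ i, x i = ∑ i, max (y i - b) 0) :
    ∑ i, (max (y i - b) 0 - y i) ^ 2 ≤ ∑ i, (x i - y i) ^ 2 := by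
  have hsplit : ∑ i, (x i - y i) ^ 2 = ∑ i, (max (y i - b) 0 - y i) ^ 2 +
      ∑ i, (x i - max (y i - b) 0) ^ 2 +
      2 * ∑ i, (max (y i - b) 0 - y i) * (x i - max (y i - b) 0) := by
    rw [Finset.mul_sum, ← Finset.sum_add_distrib, ← Finset.sum_add_distrib]
    exact Finset.sum_congr rfl fun i _ => by ring
  have hsq : 0 ≤ ∑ i, (x i - max (y i - b) 0) ^ 2 := Finset.sum_nonneg fun i _ => sq_nonneg _
  linarith [sum_sub_max_mul_sub_nonneg y hx hsum]

end

theorem simplex_projection_form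
    {d : ℕ} (hd : 0 < d) (y : Fin d → ℝ) :
    ∃! b : ℝ, (∑ i, max (y i - b) 0 = 1) ∧
      (fun i => max (y i - b) 0) ∈ simplex d ∧
      ∀ x ∈ simplex d, edist2 (fun i => max (y i - b) 0) y ≤ edist2 x y := by
  have : Nonempty (Fin d) := ⟨⟨0, hd⟩⟩
  obtain ⟨b, hb⟩ := exists_sum_max_sub_eq y zero_le_one
  refine ⟨b, ⟨hb, ⟨fun i => le_max_right _ _, hb⟩, ?_⟩, fun b' hb' => ?_⟩
  · rintro x ⟨hx_nonneg, hx_sum⟩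
    exact Real.sqrt_le_sqrt (sum_sq_max_sub_le y hx_nonneg (hx_sum.trans hb.symm))
  · exact eq_of_sum_max_sub_eq y one_pos hb'.1 hb
end

section
/- Let y ∈ ℝ^d and suppose b̄ ∈ ℝ satisfies Σᵢ max(yᵢ − b̄, 0) = 1. Then x* = (y − b̄·1)_+ is the Euclidean projection of y onto the simplex Δ_d, i.e., for all x ∈ Δ_d, ‖x* − y‖₂ ≤ ‖x − y‖₂. -/
open BigOperators

/-! The thresholded point `p = (y - b)_+` satisfies the obtuse-angle criterion
`⟪x - p, p - y⟫ ≥ 0` on the simplex: coordinatewise, `p - (y - b) = (b - y)_+` is nonnegative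
and vanishes unless `p = 0`, so `(x - p)(p - (y - b)) ≥ 0` for `x ≥ 0`, while the shift by `b`
contributes `b (∑ x - ∑ p) = 0`. The criterion then gives `‖x - y‖² ≥ ‖p - y‖² + ‖x - p‖²`. -/

lemma sub_max_mul_max_sub_nonneg {x t : ℝ} (hx : 0 ≤ x) :
    0 ≤ (x - max t 0) * (max t 0 - t) := by
  rcases le_total t 0 with ht | ht
  · rw [max_eq_right ht]
    nlinarith
  · simp [max_eq_left ht]

lemma sum_sq_sub_le_of_sum_mul_nonneg {ι : Type*} [Fintype ι] (x p y : ι → ℝ)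
    (h : 0 ≤ ∑ i, (x i - p i) * (p i - y i)) :
    ∑ i, (p i - y i) ^ 2 ≤ ∑ i, (x i - y i) ^ 2 := by
  have expand : ∑ i, (x i - y i) ^ 2
      = ∑ i, (p i - y i) ^ 2 + ∑ i, (x i - p i) ^ 2 + 2 * ∑ i, (x i - p i) * (p i - y i) := by
    rw [Finset.mul_sum, ← Finset.sum_add_distrib, ← Finset.sum_add_distrib]
    exact Finset.sum_congr rfl fun i _ => by ring
  have hsq : 0 ≤ ∑ i, (x i - p i) ^ 2 := Finset.sum_nonneg fun i _ => sq_nonneg _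
  linarith

lemma sum_sub_threshold_mul_threshold_sub_nonneg {ι : Type*} [Fintype ι] (x y : ι → ℝ) (b : ℝ)
    (hx : ∀ i, 0 ≤ x i) (hsum : ∑ i, x i = ∑ i, max (y i - b) 0) :
    0 ≤ ∑ i, (x i - max (y i - b) 0) * (max (y i - b) 0 - y i) := by
  have shift : ∑ i, (x i - max (y i - b) 0) * (max (y i - b) 0 - y i)
      = ∑ i, (x i - max (y i - b) 0) * (max (y i - b) 0 - (y i - b))
        - b * (∑ i, x i - ∑ i, max (y i - b) 0) := by
    rw [← Finset.sum_sub_distrib, Finset.mul_sum, ← Finset.sum_sub_distrib]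
    exact Finset.sum_congr rfl fun i _ => by ring
  rw [shift, hsum, sub_self, mul_zero, sub_zero]
  exact Finset.sum_nonneg fun i _ => sub_max_mul_max_sub_nonneg (hx i)

theorem thresholded_point_is_projection
    {d : ℕ} (y : Fin d → ℝ) (b : ℝ)
    (hb : ∑ i, max (y i - b) 0 = 1) :
    ∀ x ∈ simplex d, edist2 (fun i => max (y i - b) 0) y ≤ edist2 x y := by
  rintro x ⟨hx_nonneg, hx_sum⟩
  exact Real.sqrt_le_sqrt <| sum_sq_sub_le_of_sum_mul_nonneg _ _ _ <|
    sum_sub_threshold_mul_threshold_sub_nonneg x y b hx_nonneg (hx_sum.trans hb.symm)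
end
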